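/- Let f : 2^ω → 2 and suppose that for every i < ω there exists x⃗ ∈ f^{-1}(1) with x_i = 0 (equivalently, some countable family of elements of f^{-1}(1) has coordinatewise meet 0⃗). Then ∀₂ ∈ ⟨f, ⋀, ⌈∨⌉⟩, where ⋀ : 2^ω → 2 is countably infinite conjunction and ⌈∨⌉ : 2^3 → 2 is (x,y,z) ↦ x ∧ (y ∨ z). -/
import Mathlib


open scoped Classical

/-- An arity: `some n` is the finite arity `n ≥ 1`; `none` is the countably infinite arity ω. -/
abbrev Arity := Option ℕ+

/-- The index set of an arity. -/
abbrev Idx : Arity → Type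
  | some n => Fin (n : ℕ)
  | none => ℕ

/-- A Boolean function of some arity `1 ≤ n ≤ ω`.  The input space `Idx a → Bool`
carries the product topology (with `Bool` discrete), the product σ-algebra (= Borel),
and the coordinatewise partial order. -/
abbrev BFun : Type := Σ a : Arity, (Idx a → Bool) → Bool

/-- A clone: a set of Boolean functions of arities `1 ≤ n ≤ ω` containing all projections
and closed under composition. -/
structure IsClone (F : Set BFun) : Prop where
  proj : ∀ (a : Arity) (i : Idx a), (⟨a, fun x => x i⟩ : BFun) ∈ F
  comp : ∀ (a b : Arity) (g : (Idx a → Bool) → Bool) (f : Idx a → (Idx b → Bool) → Bool),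
      (⟨a, g⟩ : BFun) ∈ F → (∀ i, (⟨b, f i⟩ : BFun) ∈ F) →
      (⟨b, fun x => g fun i => f i x⟩ : BFun) ∈ F

/-- The clone generated by a set of Boolean functions. -/
def cloneGen (G : Set BFun) : Set BFun := ⋂₀ {F : Set BFun | IsClone F ∧ G ⊆ F}

/-- `f` has finite arity. -/
def finitary (f : BFun) : Prop := f.1 ≠ none

/-- `f` is Borel: the preimage of `1` is a Borel set. -/
def IsBorelFun (f : BFun) : Prop := MeasurableSet {x | f.2 x = true}

/-- `f` is continuous (equivalently, depends on only finitely many coordinates). -/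
def IsContFun (f : BFun) : Prop := Continuous f.2

/-- `f(0⃗) = 0`. -/
def PresBot (f : BFun) : Prop := f.2 (fun _ => false) = false

/-- `f(1⃗) = 1`. -/
def PresTop (f : BFun) : Prop := f.2 (fun _ => true) = true

/-- `f` vanishes on a neighborhood of `0⃗`, i.e. `0⃗` is not in the closure of `f⁻¹(1)`. -/
def VanishNearBot (f : BFun) : Prop := (fun _ => false) ∉ closure {x | f.2 x = true}

/-- `f` equals `1` on a neighborhood of `1⃗`, i.e. `1⃗` is not in the closure of `f⁻¹(0)`. -/
def OneNearTop (f : BFun) : Prop := (fun _ => true) ∉ closure {x | f.2 x = false}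

/-- Countably infinite disjunction `⋁ : 2^ω → 2`. -/
noncomputable def bigOr : (ℕ → Bool) → Bool := fun x => decide (∃ i, x i = true)

/-- Countably infinite conjunction `⋀ : 2^ω → 2`. -/
noncomputable def bigAnd : (ℕ → Bool) → Bool := fun x => decide (∀ i, x i = true)

/-- `liminf : 2^ω → 2`, equal to `1` iff all but finitely many bits are `1`. -/
noncomputable def liminfF : (ℕ → Bool) → Bool := fun x => decide (∃ N, ∀ j, N ≤ j → x j = true)

/-- `∀₂ : 2^ω → 2`: equal to `1` iff at most one input bit is `0`. -/
noncomputable def forall2 : (ℕ → Bool) → Bool :=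
  fun x => decide (∀ i j : ℕ, x i = false → x j = false → i = j)

/-- `⌈∨⌉ : 2^3 → 2`, `(x, y, z) ↦ x ∧ (y ∨ z)`. -/
def ceilOr3 : BFun :=
  ⟨some 3, fun x => x ⟨0, by norm_num⟩ && (x ⟨1, by norm_num⟩ || x ⟨2, by norm_num⟩)⟩
section Helpers

variable {F : Set BFun}

lemma clone_comp_omega (hF : IsClone F) (g : (ℕ → Bool) → Bool)
    (u : ℕ → (ℕ → Bool) → Bool)
    (hg : (⟨none, g⟩ : BFun) ∈ F) (hu : ∀ k, (⟨none, u k⟩ : BFun) ∈ F) :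
    (⟨none, fun y => g fun k => u k y⟩ : BFun) ∈ F :=
  hF.comp none none g u hg hu

lemma clone_gor (hF : IsClone F) (h3 : ceilOr3 ∈ F)
    {A B C : (ℕ → Bool) → Bool}
    (hA : (⟨none, A⟩ : BFun) ∈ F) (hB : (⟨none, B⟩ : BFun) ∈ F)
    (hC : (⟨none, C⟩ : BFun) ∈ F) :
    (⟨none, fun y => A y && (B y || C y)⟩ : BFun) ∈ F := by
  have hmem : ∀ i : Fin 3,
      (⟨none, fun y => if i.val = 0 then A y else if i.val = 1 then B y else C y⟩ : BFun) ∈ F := by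
    intro i
    obtain ⟨v, hv⟩ := i
    have hv3 : v < 3 := hv
    interval_cases v <;> simp <;> assumption
  have h := hF.comp (some 3) none ceilOr3.2
      (fun i y => if i.val = 0 then A y else if i.val = 1 then B y else C y) h3 hmem
  have e : (fun x => ceilOr3.2 fun i : Fin 3 =>
      (if i.val = 0 then A x else if i.val = 1 then B x else C x))
      = fun y => A y && (B y || C y) := by
    funext y
    simp [ceilOr3]
  exact e ▸ h

end Helpers
section Forall2Aux

/-- All-ones-except-`j` vector. -/
def Evec (j : ℕ) : ℕ → Bool := fun m => decide (m ≠ j)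

/-- `y ↦ y k ∧ (y 0 ∨ y 1)`: equals `1` at `1⃗` and at every `Evec j` with `j ≠ k`. -/
def wfiller (k : ℕ) : (ℕ → Bool) → Bool := fun y => y k && (y 0 || y 1)

noncomputable def wu0 (x : ℕ → ℕ → Bool) (k : ℕ) : (ℕ → Bool) → Bool :=
  fun y => bigAnd fun i => if x i k = true then wfiller k y else y i

noncomputable def ws0 (f : (ℕ → Bool) → Bool) (x : ℕ → ℕ → Bool) : (ℕ → Bool) → Bool :=
  fun y => f fun k => wu0 x k y

noncomputable def wC (f : (ℕ → Bool) → Bool) (x : ℕ → ℕ → Bool) (k : ℕ) : (ℕ → Bool) → Bool :=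
  if x 0 k = true then wfiller k else ws0 f x

noncomputable def wu1 (f : (ℕ → Bool) → Bool) (x : ℕ → ℕ → Bool) (k : ℕ) : (ℕ → Bool) → Bool :=
  fun y => wu0 x k y && (wC f x k y || wC f x k y)

noncomputable def ws1 (f : (ℕ → Bool) → Bool) (x : ℕ → ℕ → Bool) : (ℕ → Bool) → Bool :=
  fun y => f fun k => wu1 f x k y

lemma wfiller_top (k : ℕ) : wfiller k (fun _ => true) = true := rfl

lemma wfiller_E {k j : ℕ} (hkj : k ≠ j) : wfiller k (Evec j) = true := by
  have h01 : j ≠ 0 ∨ j ≠ 1 := by omega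
  simp only [wfiller, Evec]
  rcases h01 with h | h <;> simp [hkj, Ne.symm h]

lemma wu0_E (x : ℕ → ℕ → Bool) (hx2 : ∀ i, x i i = false) (k j : ℕ) :
    wu0 x k (Evec j) = x j k := by
  cases hjk : x j k with
  | false =>
    simp only [wu0, bigAnd, decide_eq_false_iff_not]
    intro hall
    have := hall j
    simp [hjk, Evec] at this
  | true =>
    have hkj : k ≠ j := by
      intro e; rw [e, hx2 j] at hjk; exact Bool.noConfusion hjk
    simp only [wu0, bigAnd, decide_eq_true_eq]
    intro i
    by_cases hik : x i k = true
    · simp [hik, wfiller_E hkj]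
    · have hij : i ≠ j := fun e => hik (e ▸ hjk)
      simp [hik, Evec, hij]

lemma wu0_top (x : ℕ → ℕ → Bool) (k : ℕ) : wu0 x k (fun _ => true) = true := by
  simp only [wu0, bigAnd, decide_eq_true_eq]
  intro i
  by_cases hik : x i k = true <;> simp [hik, wfiller]

lemma ws0_E (f : (ℕ → Bool) → Bool) (x : ℕ → ℕ → Bool) (hx2 : ∀ i, x i i = false) (j : ℕ) :
    ws0 f x (Evec j) = f (x j) := by
  unfold ws0; congr 1; funext k; exact wu0_E x hx2 k j

lemma ws0_top (f : (ℕ → Bool) → Bool) (x : ℕ → ℕ → Bool) :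
    ws0 f x (fun _ => true) = f (fun _ => true) := by
  unfold ws0; congr 1; funext k; exact wu0_top x k

lemma wu1_E (f : (ℕ → Bool) → Bool) (x : ℕ → ℕ → Bool)
    (hx1 : ∀ i, f (x i) = true) (hx2 : ∀ i, x i i = false) (k j : ℕ) :
    wu1 f x k (Evec j) = x j k := by
  unfold wu1
  rw [wu0_E x hx2]
  cases hjk : x j k with
  | false => simp
  | true =>
    have hkj : k ≠ j := by
      intro e; rw [e, hx2 j] at hjk; exact Bool.noConfusion hjk
    have hCk : wC f x k (Evec j) = true := by
      unfold wC
      by_cases h0 : x 0 k = true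
      · simp [h0, wfiller_E hkj]
      · simp [h0, ws0_E f x hx2 j, hx1 j]
    simp [hCk]

lemma wu1_top (f : (ℕ → Bool) → Bool) (x : ℕ → ℕ → Bool)
    (hff : f (fun _ => true) = false) (k : ℕ) :
    wu1 f x k (fun _ => true) = x 0 k := by
  unfold wu1
  rw [wu0_top]
  cases h0 : x 0 k with
  | false => simp [wC, h0, ws0_top, hff]
  | true => simp [wC, h0, wfiller]

/-- Pair enumeration: distinct coordinates. -/
def wp1 (n : ℕ) : ℕ := if n.unpair.1 = n.unpair.2 then 0 else n.unpair.1
def wp2 (n : ℕ) : ℕ := if n.unpair.1 = n.unpair.2 then 1 else n.unpair.2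

lemma wp_ne (n : ℕ) : wp1 n ≠ wp2 n := by
  unfold wp1 wp2
  split
  · exact Nat.zero_ne_one
  · assumption

lemma wp_pair {i j : ℕ} (hij : i ≠ j) :
    wp1 (Nat.pair i j) = i ∧ wp2 (Nat.pair i j) = j := by
  simp [wp1, wp2, Nat.unpair_pair, hij]

end Forall2Aux

theorem forall2_mem_cloneGen (f : (ℕ → Bool) → Bool)
    (h : ∀ i : ℕ, ∃ x : ℕ → Bool, f x = true ∧ x i = false) :
    (⟨none, forall2⟩ : BFun) ∈
      cloneGen {(⟨none, f⟩ : BFun), (⟨none, bigAnd⟩ : BFun), ceilOr3} := by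
  rw [cloneGen, Set.mem_sInter]
  rintro F ⟨hF, hGsub⟩
  have hf : (⟨none, f⟩ : BFun) ∈ F := hGsub (by simp)
  have hAnd : (⟨none, bigAnd⟩ : BFun) ∈ F := hGsub (by simp)
  have h3 : ceilOr3 ∈ F := hGsub (by simp)
  choose x hx1 hx2 using h
  -- construct `s` in the clone with `s = 1` on the support of `forall2`
  obtain ⟨s, hs, hsE, hsT⟩ : ∃ s : (ℕ → Bool) → Bool, (⟨none, s⟩ : BFun) ∈ F ∧
      (∀ j, s (Evec j) = true) ∧ s (fun _ => true) = true := by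
    have hwfiller : ∀ k, (⟨none, wfiller k⟩ : BFun) ∈ F := fun k =>
      clone_gor hF h3 (hF.proj none k) (hF.proj none 0) (hF.proj none 1)
    have hu0 : ∀ k, (⟨none, wu0 x k⟩ : BFun) ∈ F := by
      intro k
      refine clone_comp_omega hF bigAnd
        (fun i y => if x i k = true then wfiller k y else y i) hAnd ?_
      intro i
      by_cases hik : x i k = true
      · simp only [hik, if_true]
        exact hwfiller k
      · simp only [if_neg hik]
        exact hF.proj none i
    have hs0 : (⟨none, ws0 f x⟩ : BFun) ∈ F := clone_comp_omega hF f (wu0 x) hf hu0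
    by_cases hftop : f (fun _ => true) = true
    · refine ⟨ws0 f x, hs0, fun j => ?_, ?_⟩
      · rw [ws0_E f x hx2 j]; exact hx1 j
      · rw [ws0_top]; exact hftop
    · have hff : f (fun _ => true) = false := by
        cases hval : f (fun _ => true)
        · rfl
        · exact absurd hval hftop
      have hC : ∀ k, (⟨none, wC f x k⟩ : BFun) ∈ F := by
        intro k
        unfold wC
        split
        · exact hwfiller k
        · exact hs0
      have hu1 : ∀ k, (⟨none, wu1 f x k⟩ : BFun) ∈ F := fun k =>
        clone_gor hF h3 (hu0 k) (hC k) (hC k)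
      have hs1 : (⟨none, ws1 f x⟩ : BFun) ∈ F := clone_comp_omega hF f (wu1 f x) hf hu1
      refine ⟨ws1 f x, hs1, fun j => ?_, ?_⟩
      · unfold ws1
        rw [show (fun k => wu1 f x k (Evec j)) = x j from
          funext fun k => wu1_E f x hx1 hx2 k j]
        exact hx1 j
      · unfold ws1
        rw [show (fun k => wu1 f x k (fun _ => true)) = x 0 from
          funext fun k => wu1_top f x hff k]
        exact hx1 0
  -- final expression for forall2
  have hGmem : (⟨none, fun y => bigAnd fun n => s y && (y (wp1 n) || y (wp2 n))⟩ : BFun) ∈ F :=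
    clone_comp_omega hF bigAnd (fun n y => s y && (y (wp1 n) || y (wp2 n))) hAnd
      (fun n => clone_gor hF h3 hs (hF.proj none (wp1 n)) (hF.proj none (wp2 n)))
  have hEq : forall2 = fun y => bigAnd fun n => s y && (y (wp1 n) || y (wp2 n)) := by
    funext y
    by_cases hy : ∀ i j : ℕ, y i = false → y j = false → i = j
    · have h1 : forall2 y = true := by simp only [forall2]; exact decide_eq_true hy
      rw [h1]
      symm
      simp only [bigAnd, decide_eq_true_eq]
      intro n
      have hsy : s y = true := by
        by_cases hy1 : ∀ m, y m = true
        · rw [show y = fun _ => true from funext hy1]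
          exact hsT
        · push_neg at hy1
          obtain ⟨j, hj⟩ := hy1
          have hjf : y j = false := by
            cases hv : y j
            · rfl
            · exact absurd hv hj
          have hyE : y = Evec j := by
            funext m
            by_cases hm : m = j
            · subst hm; simp [Evec, hjf]
            · have hmt : y m = true := by
                cases hv : y m
                · exact absurd (hy m j hv hjf) hm
                · rfl
              simp [Evec, hm, hmt]
          rw [hyE]
          exact hsE j
      rw [hsy]
      simp only [Bool.true_and]
      cases h1v : y (wp1 n) with
      | true => simp
      | false =>
        cases h2v : y (wp2 n) with
        | true => simp
        | false => exact absurd (hy _ _ h1v h2v) (wp_ne n)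
    · have h0 : forall2 y = false := by simp only [forall2]; exact decide_eq_false hy
      rw [h0]
      symm
      push_neg at hy
      obtain ⟨i, j, hyi, hyj, hij⟩ := hy
      simp only [bigAnd, decide_eq_false_iff_not]
      intro hall
      have hterm := hall (Nat.pair i j)
      rw [(wp_pair hij).1, (wp_pair hij).2, hyi, hyj] at hterm
      simp at hterm
  rw [hEq]
  exact hGmem
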